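/- arXiv:0812.3072 — 2 statements merged into one kernel-verified Lean document; each statement's English description precedes it below -/
import Mathlib

section
/- Let n ≥ 3 and let L be an ortholattice in which the n-Go equation holds for all elements. Then for all a₁, …, aₙ ∈ L and all indices 1 ≤ j ≤ n, 1 ≤ k ≤ n: a₁ ≡γ aₙ ≤ aⱼ → aₖ. -/
/-- An ortholattice: a bounded lattice with an orthocomplementation. -/
class Ortholattice (α : Type*) extends Lattice α, BoundedOrder α, Compl α where
  compl_compl : ∀ a : α, aᶜᶜ = a
  compl_le_compl : ∀ a b : α, a ≤ b → bᶜ ≤ aᶜ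
  inf_compl_self : ∀ a : α, a ⊓ aᶜ = ⊥
  sup_compl_self : ∀ a : α, a ⊔ aᶜ = ⊤

/-- The Sasaki hook `a → b := a' ⊔ (a ⊓ b)`. -/
def sasaki {α : Type*} [Ortholattice α] (a b : α) : α := aᶜ ⊔ (a ⊓ b)

/-- The Godowski identity `a₁ ≡γ aₙ = (a₁→a₂) ⊓ ⋯ ⊓ (aₙ₋₁→aₙ) ⊓ (aₙ→a₁)`. -/
def goFwd {α : Type*} [Ortholattice α] (n : ℕ) (hn : 3 ≤ n) (a : Fin n → α) : α :=
  Finset.univ.inf fun i : Fin n => sasaki (a i) (a (i + ⟨1, by omega⟩))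

/-- The Godowski identity `aₙ ≡γ a₁ = (aₙ→aₙ₋₁) ⊓ ⋯ ⊓ (a₂→a₁) ⊓ (a₁→aₙ)`. -/
def goBwd {α : Type*} [Ortholattice α] (n : ℕ) (hn : 3 ≤ n) (a : Fin n → α) : α :=
  Finset.univ.inf fun i : Fin n => sasaki (a (i + ⟨1, by omega⟩)) (a i)

/-!
Specialising the `n`-Go equation to `(x, y, z, z, …, z)` gives the 3-Go equation, whose instance
`z = ⊤` is the orthomodular law. In an orthomodular lattice the Sasaki projection `y ⊓ (yᶜ ⊔ g)`
is left adjoint to the Sasaki hook `y → ·`, and together with the 3-Go equation this makes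
"`g ≤ x → y` and `g ≤ y → x`" a transitive relation between `x` and `y`. For `g = a₁ ≡γ aₙ`
consecutive entries of the cycle are related (forwards by definition, backwards by the `n`-Go
equation), hence so are any two.
-/

namespace Ortholattice

variable {α : Type*} [Ortholattice α]

theorem compl_le_compl_iff {a b : α} : aᶜ ≤ bᶜ ↔ b ≤ a :=
  ⟨fun h => by simpa only [Ortholattice.compl_compl] using Ortholattice.compl_le_compl _ _ h,
    Ortholattice.compl_le_compl b a⟩

def complIso : α ≃o αᵒᵈ where
  toFun a := OrderDual.toDual aᶜ
  invFun a := (OrderDual.ofDual a)ᶜ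
  left_inv := Ortholattice.compl_compl
  right_inv a := Ortholattice.compl_compl (OrderDual.ofDual a)
  map_rel_iff' := compl_le_compl_iff

theorem compl_sup (a b : α) : (a ⊔ b)ᶜ = aᶜ ⊓ bᶜ := complIso.map_sup a b

theorem compl_inf (a b : α) : (a ⊓ b)ᶜ = aᶜ ⊔ bᶜ := complIso.map_inf a b

theorem compl_top : (⊤ : α)ᶜ = ⊥ := (complIso (α := α)).map_top

theorem sasaki_eq_top_of_le {a b : α} (h : a ≤ b) : sasaki a b = ⊤ := by
  rw [sasaki, inf_eq_left.2 h, sup_comm, sup_compl_self]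

theorem sasaki_self (a : α) : sasaki a a = ⊤ := sasaki_eq_top_of_le le_rfl

theorem sasaki_top (a : α) : sasaki a ⊤ = ⊤ := sasaki_eq_top_of_le le_top

theorem top_sasaki (a : α) : sasaki ⊤ a = a := by
  rw [sasaki, compl_top, top_inf_eq, bot_sup_eq]

theorem sasaki_right_mono (a : α) : Monotone (sasaki a) :=
  fun _ _ h => sup_le_sup_left (inf_le_inf_left a h) _

def IsOrthomodular (α : Type*) [Ortholattice α] : Prop :=
  ∀ x y : α, y ≤ x → x ⊓ (xᶜ ⊔ y) = y

def sasakiProj (y g : α) : α := y ⊓ (yᶜ ⊔ g)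

namespace IsOrthomodular

theorem compl_sup_inf_eq (hα : IsOrthomodular α) {x c : α} (h : xᶜ ≤ c) : xᶜ ⊔ (x ⊓ c) = c := by
  have hc : cᶜ ≤ x := by rwa [← compl_le_compl_iff, Ortholattice.compl_compl]
  have := congrArg (·ᶜ) (hα x cᶜ hc)
  simpa only [compl_inf, compl_sup, Ortholattice.compl_compl] using this

theorem inf_sasaki_le (hα : IsOrthomodular α) (x y : α) : x ⊓ sasaki x y ≤ y :=
  (hα x (x ⊓ y) inf_le_left).le.trans inf_le_right

theorem gc_sasakiProj_sasaki (hα : IsOrthomodular α) (y : α) :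
    GaloisConnection (sasakiProj y) (sasaki y) :=
  GaloisConnection.monotone_intro (sasaki_right_mono y)
    (fun _ _ h => inf_le_inf_left _ (sup_le_sup_left h _))
    (fun g => by
      rw [sasaki, sasakiProj, ← inf_assoc, inf_idem, hα.compl_sup_inf_eq le_sup_left]
      exact le_sup_right)
    (fun z => by
      rw [sasakiProj, sasaki, sup_left_idem]
      exact hα.inf_sasaki_le y z)

end IsOrthomodular

/-- Relabelling `(x, y, z)` as `(y, x, z)` gives the reverse inequality, so this is the
3-Go equation. -/
def SatisfiesGo3 (α : Type*) [Ortholattice α] : Prop :=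
  ∀ x y z : α, sasaki x y ⊓ sasaki y z ⊓ sasaki z x ≤ sasaki y x ⊓ sasaki z y ⊓ sasaki x z

namespace SatisfiesGo3

theorem isOrthomodular (h3 : SatisfiesGo3 α) : IsOrthomodular α := by
  intro x y hyx
  refine le_antisymm ?_ (le_inf hyx le_sup_right)
  calc x ⊓ (xᶜ ⊔ y) = sasaki x y ⊓ sasaki y ⊤ ⊓ sasaki ⊤ x := by
        rw [sasaki_top, top_sasaki, inf_top_eq, inf_comm, sasaki, inf_eq_right.2 hyx]
    _ ≤ sasaki y x ⊓ sasaki ⊤ y ⊓ sasaki x ⊤ := h3 x y ⊤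
    _ ≤ y := by
      rw [top_sasaki]
      exact inf_le_left.trans inf_le_right

theorem le_sasaki_trans (h3 : SatisfiesGo3 α) {g x y z : α} (hxy : g ≤ sasaki x y)
    (hyx : g ≤ sasaki y x) (hyz : g ≤ sasaki y z) : g ≤ sasaki x z := by
  have gc := h3.isOrthomodular.gc_sasakiProj_sasaki y
  have hpx : sasakiProj y g ≤ x := gc.l_le hyx
  -- the 3-Go law on the cycle `p → x → y → p`, with `p` the Sasaki projection of `g` onto `y`
  have hcycle : g ≤ sasaki (sasakiProj y g) x ⊓ sasaki x y ⊓ sasaki y (sasakiProj y g) :=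
    le_inf (le_inf (sasaki_eq_top_of_le hpx ▸ le_top) hxy) (gc.le_u_l g)
  calc g ≤ sasaki x (sasakiProj y g) :=
        (hcycle.trans (h3 _ x y)).trans (inf_le_left.trans inf_le_left)
    _ ≤ sasaki x z := sasaki_right_mono x (gc.l_le hyz)

theorem le_sasaki_both_trans (h3 : SatisfiesGo3 α) {g x y z : α}
    (hxy : g ≤ sasaki x y ∧ g ≤ sasaki y x) (hyz : g ≤ sasaki y z ∧ g ≤ sasaki z y) :
    g ≤ sasaki x z ∧ g ≤ sasaki z x :=
  ⟨h3.le_sasaki_trans hxy.1 hxy.2 hyz.1, h3.le_sasaki_trans hyz.2 hyz.1 hxy.2⟩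

theorem le_sasaki_of_le_sasaki_add_one (h3 : SatisfiesGo3 α) {n : ℕ} (hn : 1 < n) {g : α}
    {a : Fin n → α}
    (hstep : ∀ i, g ≤ sasaki (a i) (a (i + ⟨1, hn⟩)) ∧ g ≤ sasaki (a (i + ⟨1, hn⟩)) (a i))
    (j k : Fin n) : g ≤ sasaki (a j) (a k) := by
  have hfrom0 : ∀ m (hm : m < n),
      g ≤ sasaki (a ⟨0, by omega⟩) (a ⟨m, hm⟩) ∧ g ≤ sasaki (a ⟨m, hm⟩) (a ⟨0, by omega⟩) := by
    intro m hm
    induction m with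
    | zero => simp only [sasaki_self, le_top, and_self]
    | succ m ih =>
      have hsucc : (⟨m + 1, hm⟩ : Fin n) = ⟨m, by omega⟩ + ⟨1, hn⟩ :=
        Fin.ext (by rw [Fin.val_add, Nat.mod_eq_of_lt hm])
      rw [hsucc]
      exact h3.le_sasaki_both_trans (ih _) (hstep _)
  exact (h3.le_sasaki_both_trans (hfrom0 j j.2).symm (hfrom0 k k.2)).1

end SatisfiesGo3

end Ortholattice

theorem Fin.val_add_mk_one {n : ℕ} (hn : 1 < n) (i : Fin n) :
    ((i + ⟨1, hn⟩ : Fin n) : ℕ) = if (i : ℕ) + 1 = n then 0 else (i : ℕ) + 1 := by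
  change ((i : ℕ) + 1) % n = _
  split_ifs with h
  · simp [h]
  · exact Nat.mod_eq_of_lt (by omega)

section Godowski

open Ortholattice

variable {α : Type*} [Ortholattice α]

theorem goFwd_le_sasaki {n : ℕ} (hn : 3 ≤ n) (a : Fin n → α) (i : Fin n) :
    goFwd n hn a ≤ sasaki (a i) (a (i + ⟨1, by omega⟩)) :=
  Finset.inf_le (f := fun i => sasaki (a i) (a (i + _))) (Finset.mem_univ i)

theorem goBwd_le_sasaki {n : ℕ} (hn : 3 ≤ n) (a : Fin n → α) (i : Fin n) :
    goBwd n hn a ≤ sasaki (a (i + ⟨1, by omega⟩)) (a i) :=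
  Finset.inf_le (f := fun i => sasaki (a (i + _)) (a i)) (Finset.mem_univ i)

/-- The `n`-Go equation on the tuple `(x, y, z, z, …, z)` is the 3-Go equation. -/
theorem satisfiesGo3_of_go {n : ℕ} (hn : 3 ≤ n)
    (hGo : ∀ a : Fin n → α, goFwd n hn a = goBwd n hn a) : SatisfiesGo3 α := by
  intro x y z
  let t : Fin n → α := fun i => if (i : ℕ) = 0 then x else if (i : ℕ) = 1 then y else z
  have hfwd : sasaki x y ⊓ sasaki y z ⊓ sasaki z x ≤ goFwd n hn t := by
    refine Finset.le_inf fun i _ => ?_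
    simp only [t, Fin.val_add_mk_one]
    split_ifs <;>
      first
        | omega | contradiction | exact le_top.trans_eq (sasaki_self _).symm
        | exact inf_le_left.trans inf_le_left | exact inf_le_left.trans inf_le_right
        | exact inf_le_right
  have hlast : n - 1 + 1 = n := Nat.sub_add_cancel (by omega)
  calc sasaki x y ⊓ sasaki y z ⊓ sasaki z x ≤ goBwd n hn t := hGo t ▸ hfwd
    _ ≤ sasaki y x ⊓ sasaki z y ⊓ sasaki x z := by
      refine le_inf (le_inf ?_ ?_) ?_
      · simpa [t, Fin.val_add_mk_one, show 1 ≠ n by omega]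
          using goBwd_le_sasaki hn t ⟨0, by omega⟩
      · simpa [t, Fin.val_add_mk_one, show 2 ≠ n by omega]
          using goBwd_le_sasaki hn t ⟨1, by omega⟩
      · simpa [t, Fin.val_add_mk_one, hlast, show n - 1 ≠ 0 by omega, show n - 1 ≠ 1 by omega]
          using goBwd_le_sasaki hn t ⟨n - 1, by omega⟩

end Godowski

open Ortholattice in
/-- In any ortholattice satisfying the n-Go equation (`n ≥ 3`), one has
`a₁ ≡γ aₙ ≤ aⱼ → aₖ` for all indices `j, k`. -/
theorem stmt_12 {α : Type*} [Ortholattice α] (n : ℕ) (hn : 3 ≤ n)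
    (hGo : ∀ a : Fin n → α, goFwd n hn a = goBwd n hn a)
    (a : Fin n → α) (j k : Fin n) :
    goFwd n hn a ≤ sasaki (a j) (a k) := by
  refine (satisfiesGo3_of_go hn hGo).le_sasaki_of_le_sasaki_add_one (by omega) (fun i => ?_) j k
  exact ⟨goFwd_le_sasaki hn a i, hGo a ▸ goBwd_le_sasaki hn a i⟩
end

section
/- Every Mayet–Godowski equation holds in any ortholattice L admitting a strong set of states: let n ≥ 2 and let T₁, …, Tₙ and U₁, …, Uₙ be finite lists of elements of L such that the entries within each list Tᵢ are pairwise orthogonal, the entries within each list Uᵢ are pairwise orthogonal, and the multiset of all entries of T₁, …, Tₙ combined equals the multiset of all entries of U₁, …, Uₙ combined. Let tᵢ be the join of the entries of Tᵢ and uᵢ the join of the entries of Uᵢ. Then t₁ ⊓ ⋯ ⊓ tₙ = u₁ ⊓ ⋯ ⊓ uₙ. -/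
/-- A state (probability measure) on an ortholattice. -/
def IsState {α : Type*} [Ortholattice α] (m : α → ℝ) : Prop :=
  (∀ a : α, 0 ≤ m a ∧ m a ≤ 1) ∧ m ⊤ = 1 ∧
    ∀ a b : α, a ≤ bᶜ → m (a ⊔ b) = m a + m b

/-
A state `m` is additive on joins of orthogonal lists, so `∑ i, m tᵢ` and `∑ i, m uᵢ` both equal
the sum of `m` over the common multiset of entries. If `m (t₁ ⊓ ⋯ ⊓ tₙ) = 1`, then every
`m tᵢ = 1`, so the `n` values `m uⱼ ≤ 1` sum to `n` and all equal `1`. A strong set of states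
turns "every state that is `1` on `a` is `1` on `b`" into `a ≤ b`, which gives `⋀ tᵢ ≤ uⱼ`.
-/

namespace Ortholattice

variable {α : Type*} [Ortholattice α] {a b : α}

theorem le_compl_comm : a ≤ bᶜ ↔ b ≤ aᶜ := by
  constructor <;> intro h <;>
    simpa only [Ortholattice.compl_compl] using compl_le_compl _ _ h

theorem foldr_sup_le_compl {l : List α} (h : ∀ x ∈ l, a ≤ xᶜ) :
    a ≤ (l.foldr (· ⊔ ·) ⊥)ᶜ := by
  rw [le_compl_comm, ← Multiset.sup_coe, Multiset.sup_le]
  exact fun x hx => le_compl_comm.mp (h x hx)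

end Ortholattice

namespace IsState

variable {α : Type*} [Ortholattice α] {m : α → ℝ}

theorem le_one (hm : IsState m) (a : α) : m a ≤ 1 := (hm.1 a).2

theorem map_bot (hm : IsState m) : m ⊥ = 0 := by
  have h := hm.2.2 ⊥ ⊥ bot_le
  rw [sup_bot_eq] at h
  linarith

theorem map_compl (hm : IsState m) (a : α) : m aᶜ = 1 - m a := by
  have h := hm.2.2 a aᶜ (Ortholattice.compl_compl a).ge
  rw [Ortholattice.sup_compl_self, hm.2.1] at h
  linarith

theorem mono (hm : IsState m) {a b : α} (h : a ≤ b) : m a ≤ m b := by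
  have hadd := hm.2.2 a bᶜ (h.trans (Ortholattice.compl_compl b).ge)
  linarith [hm.le_one (a ⊔ bᶜ), hm.map_compl b]

theorem eq_one_of_le (hm : IsState m) {a b : α} (h : a ≤ b) (ha : m a = 1) : m b = 1 :=
  le_antisymm (hm.le_one b) (ha ▸ hm.mono h)

theorem map_foldr_sup (hm : IsState m) {l : List α} (hl : l.Pairwise fun x y => x ≤ yᶜ) :
    m (l.foldr (· ⊔ ·) ⊥) = ((l : Multiset α).map m).sum := by
  induction l with
  | nil => simpa using hm.map_bot
  | cons a l ih =>
    obtain ⟨ha, hl⟩ := List.pairwise_cons.mp hl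
    rw [List.foldr_cons, hm.2.2 a _ (Ortholattice.foldr_sup_le_compl fun x hx => ha x hx), ih hl]
    simp

end IsState

theorem le_of_forall_eq_one_imp {β : Type*} [Preorder β] {S : Set (β → ℝ)}
    (hstrong : ∀ a b : β, ∃ m ∈ S, ((m a = 1 → m b = 1) → a ≤ b)) {a b : β}
    (h : ∀ m ∈ S, m a = 1 → m b = 1) : a ≤ b := by
  obtain ⟨m, hm, hab⟩ := hstrong a b
  exact hab (h m hm)

section MayetGodowski

variable {α ι : Type*} [Ortholattice α] [Fintype ι] {m : α → ℝ} {T U : ι → List α}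

theorem IsState.sum_map_foldr_sup (hm : IsState m) (hT : ∀ i, (T i).Pairwise fun x y => x ≤ yᶜ) :
    ∑ i, m ((T i).foldr (· ⊔ ·) ⊥) = ((∑ i, (T i : Multiset α)).map m).sum := by
  simp only [hm.map_foldr_sup (hT _), ← Multiset.coe_mapAddMonoidHom, map_sum, Multiset.sum_sum]

theorem IsState.eq_one_of_forall_eq_one (hm : IsState m)
    (hT : ∀ i, (T i).Pairwise fun x y => x ≤ yᶜ) (hU : ∀ i, (U i).Pairwise fun x y => x ≤ yᶜ)
    (hmult : (∑ i, ((T i : Multiset α))) = ∑ i, ((U i : Multiset α)))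
    (h : ∀ i, m ((T i).foldr (· ⊔ ·) ⊥) = 1) (j : ι) : m ((U j).foldr (· ⊔ ·) ⊥) = 1 := by
  have hsum : ∑ i, m ((U i).foldr (· ⊔ ·) ⊥) = ∑ _i : ι, (1 : ℝ) := by
    rw [hm.sum_map_foldr_sup hU, ← hmult, ← hm.sum_map_foldr_sup hT]
    exact Finset.sum_congr rfl fun i _ => h i
  exact (Finset.sum_eq_sum_iff_of_le fun i _ => hm.le_one _).mp hsum j (Finset.mem_univ j)

theorem inf_foldr_sup_le_of_strong {S : Set (α → ℝ)} (hS : ∀ m ∈ S, IsState m)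
    (hstrong : ∀ a b : α, ∃ m ∈ S, ((m a = 1 → m b = 1) → a ≤ b))
    (hT : ∀ i, (T i).Pairwise fun x y => x ≤ yᶜ) (hU : ∀ i, (U i).Pairwise fun x y => x ≤ yᶜ)
    (hmult : (∑ i, ((T i : Multiset α))) = ∑ i, ((U i : Multiset α))) :
    (Finset.univ.inf fun i => (T i).foldr (· ⊔ ·) ⊥) ≤
      (Finset.univ.inf fun i => (U i).foldr (· ⊔ ·) ⊥) := by
  refine Finset.le_inf fun j _ => le_of_forall_eq_one_imp hstrong fun m hmS hmt => ?_
  have hm := hS m hmS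
  have ht : ∀ i, m ((T i).foldr (· ⊔ ·) ⊥) = 1 := fun i =>
    hm.eq_one_of_le (Finset.inf_le (f := fun i => (T i).foldr (· ⊔ ·) ⊥) (Finset.mem_univ i)) hmt
  exact hm.eq_one_of_forall_eq_one hT hU hmult ht j

end MayetGodowski

theorem stmt_14_general {α : Type*} [Ortholattice α] (S : Set (α → ℝ))
    (hS : ∀ m ∈ S, IsState m)
    (hstrong : ∀ a b : α, ∃ m ∈ S, ((m a = 1 → m b = 1) → a ≤ b))
    (n : ℕ) (T U : Fin n → List α)
    (hT : ∀ i, (T i).Pairwise fun x y => x ≤ yᶜ)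
    (hU : ∀ i, (U i).Pairwise fun x y => x ≤ yᶜ)
    (hmult : (∑ i, ((T i : Multiset α))) = ∑ i, ((U i : Multiset α))) :
    (Finset.univ.inf fun i => (T i).foldr (· ⊔ ·) ⊥) =
      (Finset.univ.inf fun i => (U i).foldr (· ⊔ ·) ⊥) :=
  le_antisymm (inf_foldr_sup_le_of_strong hS hstrong hT hU hmult)
    (inf_foldr_sup_le_of_strong hS hstrong hU hT hmult.symm)

/-- Every Mayet–Godowski equation holds in any ortholattice admitting a strong
set of states: if the lists `T i` (and `U i`) each consist of mutually
orthogonal elements, and the combined multiset of entries of the `T i` equals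
the combined multiset of entries of the `U i`, then the meet of the joins of
the `T i` equals the meet of the joins of the `U i`. -/
theorem stmt_14 {α : Type*} [Ortholattice α] (S : Set (α → ℝ))
    (hne : S.Nonempty) (hS : ∀ m ∈ S, IsState m)
    (hstrong : ∀ a b : α, ∃ m ∈ S, ((m a = 1 → m b = 1) → a ≤ b))
    (n : ℕ) (hn : 2 ≤ n) (T U : Fin n → List α)
    (hT : ∀ i, (T i).Pairwise fun x y => x ≤ yᶜ)
    (hU : ∀ i, (U i).Pairwise fun x y => x ≤ yᶜ)
    (hmult : (∑ i, ((T i : Multiset α))) = ∑ i, ((U i : Multiset α))) :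
    (Finset.univ.inf fun i => (T i).foldr (· ⊔ ·) ⊥) =
      (Finset.univ.inf fun i => (U i).foldr (· ⊔ ·) ⊥) :=
  stmt_14_general S hS hstrong n T U hT hU hmult
end
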